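/- For the Contois function μ_C(s,x) = μ_max·s/(K_s·x + s) with μ_max, K_s > 0: (i) for each fixed s > 0, x ↦ μ_C(s,x) is decreasing; (ii) for each fixed s > 0, x ↦ μ_C(s,x)·x is increasing; (iii) μ_C(s,x) = μ_M(s/x) where μ_M(r) = μ_max·r/(K_s + r), and for each z₁ > 0 the map s ↦ μ_M(s/((s_in - s)z₁))·(s_in - s) is strictly concave on (0, s_in). -/

import Mathlib

open Set Filter Topology

/-! The map `s ↦ μ_M (s / ((s_in - s) z₁)) (s_in - s)` is the perspective `(s, u) ↦ u φ (s / u)`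
of the strictly concave `φ r = μ_M (r / z₁)`, restricted to the line `u = s_in - s`. Perspectives
of concave functions are concave, and strictly so along a line missing the origin, since distinct
points of such a line have distinct ratios `s / u`. -/

lemma strictAntiOn_div_mul_add {a b c : ℝ} (ha : 0 < a) (hb : 0 < b) (hc : 0 < c) :
    StrictAntiOn (fun x => a / (b * x + c)) (Ici 0) := by
  intro x (hx : 0 ≤ x) y _ hxy
  exact div_lt_div_of_pos_left ha (by positivity) (by gcongr)

lemma strictMonoOn_div_mul_add_mul {a b c : ℝ} (ha : 0 < a) (hb : 0 ≤ b) (hc : 0 < c) :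
    StrictMonoOn (fun x => a / (b * x + c) * x) (Ici 0) := by
  intro x (hx : 0 ≤ x) y (hy : 0 ≤ y) hxy
  have hdx : 0 < b * x + c := by positivity
  have hdy : 0 < b * y + c := by positivity
  simp only [div_mul_eq_mul_div]
  rw [div_lt_div_iff₀ hdx hdy]
  nlinarith [mul_lt_mul_of_pos_left hxy (mul_pos ha hc)]

lemma strictConcaveOn_mul_div_add {a b : ℝ} (ha : 0 < a) (hb : 0 < b) :
    StrictConcaveOn ℝ (Ioi 0) fun r => a * r / (b + r) := by
  refine ⟨convex_Ioi 0, fun x (hx : 0 < x) y (hy : 0 < y) hxy p q hp hq hpq => ?_⟩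
  have hinv : (b + (p * x + q * y))⁻¹ < p * (b + x)⁻¹ + q * (b + y)⁻¹ := by
    have := (strictConvexOn_zpow (m := -1) (by norm_num) (by norm_num)).2
      (show 0 < b + x by positivity) (show 0 < b + y by positivity)
      (by simpa using hxy) hp hq hpq
    have hsum : b + (p * x + q * y) = p * (b + x) + q * (b + y) := by
      linear_combination (-b) * hpq
    simpa only [hsum, zpow_neg_one, smul_eq_mul] using this
  have hrate : ∀ r, 0 < r → a * r / (b + r) = a - a * b * (b + r)⁻¹ := by
    intro r hr
    field_simp
    ring
  simp only [smul_eq_mul]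
  rw [hrate x hx, hrate y hy, hrate _ (by positivity)]
  nlinarith [mul_lt_mul_of_pos_left hinv (mul_pos ha hb)]

lemma StrictConcaveOn.comp_div_sub_mul_sub {φ : ℝ → ℝ} (hφ : StrictConcaveOn ℝ (Ioi 0) φ)
    (m : ℝ) : StrictConcaveOn ℝ (Ioo 0 m) fun s => φ (s / (m - s)) * (m - s) := by
  refine ⟨convex_Ioo 0 m, fun x hx y hy hxy p q hp hq hpq => ?_⟩
  have hu : 0 < m - x := sub_pos.2 hx.2
  have hv : 0 < m - y := sub_pos.2 hy.2
  have hw : m - (p * x + q * y) = p * (m - x) + q * (m - y) := by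
    linear_combination (-m) * hpq
  have hw_pos : 0 < p * (m - x) + q * (m - y) := by positivity
  set w := p * (m - x) + q * (m - y)
  -- `(p x + q y) / w` is the convex combination of `x / (m - x)` and `y / (m - y)`
  -- with weights `p (m - x) / w` and `q (m - y) / w`.
  have hratio : x / (m - x) ≠ y / (m - y) := by
    rw [Ne, div_eq_div_iff hu.ne' hv.ne']
    intro h
    exact hxy (mul_left_cancel₀ (hx.1.trans hx.2).ne' (by linarith))
  have key := hφ.2 (div_pos hx.1 hu) (div_pos hy.1 hv) hratio
    (div_pos (mul_pos hp hu) hw_pos) (div_pos (mul_pos hq hv) hw_pos)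
    (by rw [← add_div, div_self hw_pos.ne'])
  have hcomb : p * (m - x) / w * (x / (m - x)) + q * (m - y) / w * (y / (m - y))
      = (p * x + q * y) / w := by
    field_simp
  simp only [smul_eq_mul, hcomb] at key
  simp only [smul_eq_mul, hw]
  calc p * (φ (x / (m - x)) * (m - x)) + q * (φ (y / (m - y)) * (m - y))
      = (p * (m - x) / w * φ (x / (m - x)) + q * (m - y) / w * φ (y / (m - y))) * w := by
        field_simp
    _ < φ ((p * x + q * y) / w) * w := mul_lt_mul_of_pos_right key hw_pos

theorem stmt19_general (μmax Ks s_in : ℝ) (hμ : 0 < μmax) (hK : 0 < Ks)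
    (μC : ℝ → ℝ → ℝ) (μM : ℝ → ℝ)
    (hC : ∀ s x, μC s x = μmax * s / (Ks * x + s))
    (hMdef : ∀ r, μM r = μmax * r / (Ks + r)) :
    (∀ s > (0:ℝ), StrictAntiOn (fun x => μC s x) (Ici 0)) ∧
    (∀ s > (0:ℝ), StrictMonoOn (fun x => μC s x * x) (Ici 0)) ∧
    (∀ s > (0:ℝ), ∀ x > (0:ℝ), μC s x = μM (s / x)) ∧
    (∀ z₁ > (0:ℝ), StrictConcaveOn ℝ (Ioo 0 s_in)
      (fun s => μM (s / ((s_in - s) * z₁)) * (s_in - s))) := by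
  refine ⟨fun s hs => ?_, fun s hs => ?_, fun s hs x hx => ?_, fun z₁ hz₁ => ?_⟩
  · simpa only [hC] using strictAntiOn_div_mul_add (mul_pos hμ hs) hK hs
  · simpa only [hC] using strictMonoOn_div_mul_add_mul (mul_pos hμ hs) hK.le hs
  · rw [hC, hMdef]
    field_simp
  · have hφ : StrictConcaveOn ℝ (Ioi 0) fun r => μM (r / z₁) := by
      refine (strictConcaveOn_mul_div_add hμ (mul_pos hK hz₁)).congr fun r _ => ?_
      simp only [hMdef]
      field_simp
    simpa only [div_div] using hφ.comp_div_sub_mul_sub s_in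

theorem stmt19 (μmax Ks s_in : ℝ) (hμ : 0 < μmax) (hK : 0 < Ks)
    (hsin : 0 < s_in) (μC : ℝ → ℝ → ℝ) (μM : ℝ → ℝ)
    (hC : ∀ s x, μC s x = μmax * s / (Ks * x + s))
    (hMdef : ∀ r, μM r = μmax * r / (Ks + r)) :
    (∀ s > (0:ℝ), StrictAntiOn (fun x => μC s x) (Ici 0)) ∧
    (∀ s > (0:ℝ), StrictMonoOn (fun x => μC s x * x) (Ici 0)) ∧
    (∀ s > (0:ℝ), ∀ x > (0:ℝ), μC s x = μM (s / x)) ∧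
    (∀ z₁ > (0:ℝ), StrictConcaveOn ℝ (Ioo 0 s_in)
      (fun s => μM (s / ((s_in - s) * z₁)) * (s_in - s))) :=
  stmt19_general μmax Ks s_in hμ hK μC μM hC hMdef
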